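/- Let G = (W,R) be the fan frame with root r and, for each n ∈ ω, a disjoint branch order-isomorphic to (n,<). Let φ be the modal formula □(p∧□p⊃q)∨□(q∧□q⊃p) for distinct propositional variables p, q. Then G does not validate ¬φ ⊃ ⊥: there is a valuation v such that ((W,R,v), r) ⊭ φ. Consequently, the non-compactness rule (from φ'⊃◇ⁿ⊤ for all n ∈ ω infer φ'⊃⊥) is not true at the modal algebra Alg(G). -/

import Mathlib

/-- Modal formulas over a countable set of propositional variables. -/
inductive Fml : Type where
  | prop : ℕ → Fml
  | top : Fml
  | and : Fml → Fml → Fml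
  | neg : Fml → Fml
  | box : Fml → Fml

namespace Fml
/-- `⊥` abbreviates `¬⊤`. -/
def bot : Fml := neg top
/-- `φ ∨ ψ` abbreviates `¬(¬φ ∧ ¬ψ)`. -/
def or (φ ψ : Fml) : Fml := neg (and (neg φ) (neg ψ))
/-- `φ ⊃ ψ` abbreviates `¬(φ ∧ ¬ψ)`. -/
def imp (φ ψ : Fml) : Fml := neg (and φ (neg ψ))
/-- `◇φ` abbreviates `¬□¬φ`. -/
def dia (φ : Fml) : Fml := neg (box (neg φ))
/-- `◇ⁿφ`: n-fold application of `◇`. -/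
def dian : ℕ → Fml → Fml
  | 0, φ => φ
  | n+1, φ => dia (dian n φ)
end Fml

/-- Truth of a modal formula at a world of a Kripke model `(W, R, v)`. -/
def Truth {W : Type} (R : W → W → Prop) (v : ℕ → Set W) : Fml → W → Prop
  | .prop n, w => w ∈ v n
  | .top, _ => True
  | .and φ ψ, w => Truth R v φ w ∧ Truth R v ψ w
  | .neg φ, w => ¬ Truth R v φ w
  | .box φ, w => ∀ w', R w w' → Truth R v φ w'

/-- Valuation of modal formulas in a modal algebra. -/
def aval {A : Type} [BooleanAlgebra A] (box : A → A) (v : ℕ → A) : Fml → A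
  | .prop n => v n
  | .top => ⊤
  | .and φ ψ => aval box v φ ⊓ aval box v ψ
  | .neg φ => (aval box v φ)ᶜ
  | .box φ => box (aval box v φ)

/-- A formula is true at a modal algebra if it evaluates to `⊤` under every valuation. -/
def ATrue {A : Type} [BooleanAlgebra A] (box : A → A) (φ : Fml) : Prop :=
  ∀ v : ℕ → A, aval box v φ = ⊤

/-- The non-compactness rule is true at a modal algebra: for every formula `φ`,
if `φ ⊃ ◇ⁿ⊤` is true at the algebra for every `n`, then `φ ⊃ ⊥` is true at it. -/
def NCRule {A : Type} [BooleanAlgebra A] (box : A → A) : Prop :=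
  ∀ φ : Fml, (∀ n : ℕ, ATrue box (Fml.imp φ (Fml.dian n Fml.top))) →
    ATrue box (Fml.imp φ Fml.bot)

/-- The box operator of the powerset modal algebra `Alg(F)` of a frame `F = (W, R)`. -/
def boxF {W : Type} (R : W → W → Prop) (X : Set W) : Set W :=
  {w | ∀ w', R w w' → w' ∈ X}

/-- The diamond operator of `Alg(F)`: `◇_F X = R⁻¹[X]`. -/
def diaF {W : Type} (R : W → W → Prop) (X : Set W) : Set W :=
  {w | ∃ w', R w w' ∧ w' ∈ X}

/-- The worlds of the fan frame: the root `none` together with, for each `n ∈ ω`,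
a branch `{(n, i) : i < n}`. -/
def FanW : Type := Option ((n : ℕ) × Fin n)

/-- The accessibility relation of the fan frame: the root sees every branch point,
and `(n, i)` sees `(m, j)` iff `n = m` and `i < j`. -/
def FanR : FanW → FanW → Prop := fun a b =>
  match a, b with
  | none, some _ => True
  | some ⟨n, i⟩, some ⟨m, j⟩ => n = m ∧ (i : ℕ) < (j : ℕ)
  | _, _ => False

/-- The formula `□(p ∧ □p ⊃ q) ∨ □(q ∧ □q ⊃ p)` with `p = prop 0`, `q = prop 1`. -/
def fml14 : Fml :=
  Fml.or
    (Fml.box (Fml.imp (Fml.and (Fml.prop 0) (Fml.box (Fml.prop 0))) (Fml.prop 1)))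
    (Fml.box (Fml.imp (Fml.and (Fml.prop 1) (Fml.box (Fml.prop 1))) (Fml.prop 0)))


/-!
At every branch point the successors form a chain, and `□(p ∧ □p ⊃ q) ∨ □(q ∧ □q ⊃ p)` is valid
at any world whose successors are pairwise comparable. At the root it fails: make `p` true only at
the last point of one branch and `q` only at the last point of another. Since the root also
satisfies every `◇ⁿ⊤`, the formula `¬φ` satisfies all premises `¬φ ⊃ ◇ⁿ⊤` of the
non-compactness rule, although `¬φ ⊃ ⊥` is refuted at the root.
-/

namespace Fml

variable {W : Type} {R : W → W → Prop} {v : ℕ → Set W} {w : W} {φ ψ : Fml}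

@[simp] lemma truth_bot : ¬ Truth R v bot w := fun h => h trivial

@[simp] lemma truth_or : Truth R v (or φ ψ) w ↔ Truth R v φ w ∨ Truth R v ψ w := by
  simp only [or, Truth]; tauto

@[simp] lemma truth_imp : Truth R v (imp φ ψ) w ↔ (Truth R v φ w → Truth R v ψ w) := by
  simp only [imp, Truth]; tauto

lemma truth_dian_succ {n : ℕ} :
    Truth R v (dian (n + 1) φ) w ↔ ∃ w', R w w' ∧ Truth R v (dian n φ) w' := by
  simp only [dian, dia, Truth, not_forall, not_not, exists_prop]

end Fml

open Fml

lemma aval_boxF_eq_setOf_truth {W : Type} (R : W → W → Prop) (v : ℕ → Set W) (φ : Fml) :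
    aval (boxF R) v φ = {w | Truth R v φ w} := by
  induction φ with
  | prop n => rfl
  | top => rfl
  | and φ ψ ihφ ihψ => simp only [aval, Truth, ihφ, ihψ]; rfl
  | neg φ ih => simp only [aval, Truth, ih]; rfl
  | box φ ih => simp only [aval, Truth, ih]; rfl

lemma aTrue_boxF_iff {W : Type} {R : W → W → Prop} {φ : Fml} :
    ATrue (boxF R) φ ↔ ∀ v w, Truth R v φ w := by
  simp only [ATrue, aval_boxF_eq_setOf_truth, Set.top_eq_univ, Set.eq_univ_iff_forall,
    Set.mem_ofPred_eq]

lemma not_NCRule_boxF {W : Type} {R : W → W → Prop} (φ : Fml)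
    (hdia : ∀ n v w, Truth R v φ w → Truth R v (dian n top) w)
    (hsat : ∃ v w, Truth R v φ w) : ¬ NCRule (boxF R) := by
  intro hNC
  obtain ⟨v, w, hw⟩ := hsat
  have hbot := aTrue_boxF_iff.mp (hNC φ fun n => aTrue_boxF_iff.mpr fun v w => by
    simpa only [truth_imp] using hdia n v w) v w
  simp only [truth_imp, truth_bot] at hbot
  exact hbot hw

lemma truth_fml14_of_connected {W : Type} {R : W → W → Prop} (v : ℕ → Set W) {w : W}
    (hconn : ∀ w₁ w₂, R w w₁ → R w w₂ → R w₁ w₂ ∨ w₁ = w₂ ∨ R w₂ w₁) :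
    Truth R v fml14 w := by
  simp only [fml14, truth_or, truth_imp, Truth]
  by_contra! ⟨⟨w₁, hw₁, ⟨hp₁, hbp₁⟩, hq₁⟩, ⟨w₂, hw₂, ⟨hq₂, hbq₂⟩, hp₂⟩⟩
  rcases hconn w₁ w₂ hw₁ hw₂ with h | rfl | h
  · exact hp₂ (hbp₁ w₂ h)
  · exact hp₂ hp₁
  · exact hq₁ (hbq₂ w₁ h)

def pqValuation {W : Type} (a b : W) : ℕ → Set W := fun n => if n = 0 then {a} else {b}

lemma not_truth_fml14_of_deadEnds {W : Type} {R : W → W → Prop} {w a b : W}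
    (ha : R w a) (hb : R w b) (hab : a ≠ b) (ha_end : ∀ x, ¬ R a x) (hb_end : ∀ x, ¬ R b x) :
    ¬ Truth R (pqValuation a b) fml14 w := by
  simp only [fml14, truth_or, truth_imp, Truth, pqValuation, Set.mem_singleton_iff,
    one_ne_zero, if_true, if_false, not_or, not_forall]
  exact ⟨⟨a, ha, ⟨rfl, fun x hx => (ha_end x hx).elim⟩, hab⟩,
    ⟨b, hb, ⟨rfl, fun x hx => (hb_end x hx).elim⟩, hab.symm⟩⟩

namespace FanW

lemma fanR_connected_branch {n : ℕ} {i : Fin n} (w₁ w₂ : FanW)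
    (h₁ : FanR (some ⟨n, i⟩) w₁) (h₂ : FanR (some ⟨n, i⟩) w₂) :
    FanR w₁ w₂ ∨ w₁ = w₂ ∨ FanR w₂ w₁ := by
  match w₁, w₂, h₁, h₂ with
  | some ⟨_, j₁⟩, some ⟨_, j₂⟩, ⟨rfl, _⟩, ⟨rfl, _⟩ =>
    rcases lt_trichotomy j₁ j₂ with h | rfl | h
    · exact .inl ⟨rfl, h⟩
    · exact .inr (.inl rfl)
    · exact .inr (.inr ⟨rfl, h⟩)

lemma not_fanR_last (n : ℕ) (w : FanW) : ¬ FanR (some ⟨n + 1, Fin.last n⟩) w := by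
  match w with
  | none => exact id
  | some ⟨_, j⟩ => rintro ⟨rfl, h⟩; exact absurd j.isLt (by simp at h ⊢; omega)

lemma truth_dian_top_branch (v : ℕ → Set FanW) (k : ℕ) :
    ∀ {m : ℕ} (i : Fin m), (i : ℕ) + k < m → Truth FanR v (dian k top) (some ⟨m, i⟩) := by
  induction k with
  | zero => intros; trivial
  | succ k ih =>
    intro m i h
    exact truth_dian_succ.mpr ⟨some ⟨m, ⟨i + 1, by omega⟩⟩, ⟨rfl, Nat.lt_succ_self _⟩,
      ih _ (by simp only; omega)⟩

lemma truth_dian_top_root (v : ℕ → Set FanW) (k : ℕ) : Truth FanR v (dian k top) none := by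
  cases k with
  | zero => trivial
  | succ k =>
    exact truth_dian_succ.mpr
      ⟨some ⟨k + 1, 0⟩, trivial, truth_dian_top_branch v k 0 (by simp)⟩

end FanW

theorem stmt16 :
    (∃ v : ℕ → Set FanW, ¬ Truth FanR v fml14 (none : FanW)) ∧
    ¬ NCRule (boxF FanR) := by
  have hroot :
      ¬ Truth FanR (pqValuation (some ⟨1, Fin.last 0⟩) (some ⟨2, Fin.last 1⟩)) fml14 none :=
    not_truth_fml14_of_deadEnds trivial trivial (by rintro ⟨⟩) (FanW.not_fanR_last 0)
      (FanW.not_fanR_last 1)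
  refine ⟨⟨_, hroot⟩, not_NCRule_boxF (neg fml14) ?_ ⟨_, none, hroot⟩⟩
  rintro n v (_ | _) hw
  · exact FanW.truth_dian_top_root v n
  · exact absurd (truth_fml14_of_connected v FanW.fanR_connected_branch) hw
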